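/- arXiv:hep-th/9610061 — 2 statements merged into one kernel-verified Lean document; each statement's English description precedes it below -/
import Mathlib

section
/- Let x be either the relativistic map x_R(y) = −e^{−y} or the CGHS map x_C(y) = −log(1 + e^{−y}). Let g be a Schwartz function with ĝ(k) = 0 for all k ≤ 0, and set ǧ(y) = x′(y) g(x(y)). Then ∫_0^∞ |ǧ̂(p)|²/(2p) dp < ∞ if and only if G(0) = ∫_{−∞}^0 g(x) dx = 0. Consequently the total mean number of extra particles created by the one-particle state Ω_g, which equals ∫_0^∞ |ǧ̂(p)|²/p dp, is finite if and only if G(0) = 0. -/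
/-!
Substituting `t = x y`, the integrability of `ǧ = x' · (g ∘ x)`, of `y ↦ y ǧ(y)` and of `ǧ'`
reduces to that of `g` and `g'` against the weight `|log t| + |t| + 1` on `t < 0`, which is
harmless for Schwartz functions since `log` is integrable near `0`. So `ǧ̂` is Lipschitz at
`p = 0` and `|ǧ̂(p)| ≤ C / p` at infinity. Then `∫₀^∞ |ǧ̂(p)|² / p dp` converges at infinity, and
near `0` it converges iff `ǧ̂(0) = (2π)^{-1/2} ∫ ǧ = (2π)^{-1/2} G(0)` vanishes.
-/

open MeasureTheory Set Filter
open scoped ENNReal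

/-- The Fourier transform `f̂(p) = (2π)^{-1/2} ∫ f(y) e^{-ipy} dy`. -/
noncomputable def ft (f : ℝ → ℂ) (p : ℝ) : ℂ :=
  (Real.sqrt (2 * Real.pi) : ℂ)⁻¹ *
    ∫ y : ℝ, f y * Complex.exp (-Complex.I * (p : ℂ) * (y : ℂ))

/-- `F̌(k) = (2π)^{-1/2} ∫ f(y) e^{-ik x(y)} dy`. -/
noncomputable def Fk (x : ℝ → ℝ) (f : ℝ → ℂ) (k : ℝ) : ℂ :=
  (Real.sqrt (2 * Real.pi) : ℂ)⁻¹ *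
    ∫ y : ℝ, f y * Complex.exp (-Complex.I * (k : ℂ) * (x y : ℂ))

/-- The relativistic black-hole coordinate map `x_R(y) = -e^{-y}`. -/
noncomputable def xR (y : ℝ) : ℝ := -Real.exp (-y)

/-- The CGHS black-hole coordinate map `x_C(y) = -log(1+e^{-y})`. -/
noncomputable def xC (y : ℝ) : ℝ := -Real.log (1 + Real.exp (-y))

/-- The mean number of spontaneously created particles `N̄_o[f]`. -/
noncomputable def No (x : ℝ → ℝ) (f : ℝ → ℂ) : ℝ≥0∞ :=
  ∫⁻ k in Set.Ioi (0:ℝ), ENNReal.ofReal (‖Fk x f (-k)‖ ^ 2 / (2 * k))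

/-- The thermal mean particle number `N̄^Th_β[f]` at inverse temperature `β`. -/
noncomputable def Nth (β : ℝ) (f : ℝ → ℂ) : ℝ≥0∞ :=
  ∫⁻ p in Set.Ioi (0:ℝ),
    ENNReal.ofReal (‖ft f p‖ ^ 2 / (2 * p * (Real.exp (β * p) - 1)))

/-- translate of `f` by `y₀`. -/
noncomputable def tr (f : ℝ → ℂ) (y₀ : ℝ) : ℝ → ℂ := fun y => f (y - y₀)

/-- The outgoing function `ǧ(y) = x'(y) g(x(y))` associated with an incoming `g`. -/
noncomputable def gout (x : ℝ → ℝ) (g : ℝ → ℂ) (y : ℝ) : ℂ :=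
  ((deriv x y : ℝ) : ℂ) * g (x y)

open Real
open scoped Topology FourierTransform SchwartzMap

section SquareOverFrequency

variable {E : Type*} [NormedAddCommGroup E] {h : ℝ → E} {a : ℝ}

lemma lintegral_Ioo_ofReal_div_eq_top {k δ : ℝ} (hk : 0 < k) (hδ : 0 < δ) :
    ∫⁻ p in Ioo 0 δ, ENNReal.ofReal (k / p) = ⊤ := by
  by_contra hfin
  have hint : IntegrableOn (fun p => k / p) (Ioo 0 δ) :=
    (lintegral_ofReal_ne_top_iff_integrable (by fun_prop)
      (ae_restrict_of_forall_mem measurableSet_Ioo fun p hp => (div_pos hk hp.1).le)).1 hfin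
  have hinv : IntervalIntegrable (fun p : ℝ => p⁻¹) volume 0 δ := by
    rw [intervalIntegrable_iff_integrableOn_Ioo_of_le hδ.le]
    refine IntegrableOn.congr_fun (hint.const_mul k⁻¹) (fun p _ => ?_) measurableSet_Ioo
    field_simp
  simp [hδ.ne] at hinv

lemma lintegral_norm_sq_div_eq_top {c : E} (hc : c ≠ 0) (hh : Tendsto h (𝓝[>] 0) (𝓝 c))
    (ha : 0 < a) : ∫⁻ p in Ioi 0, ENNReal.ofReal (‖h p‖ ^ 2 / (a * p)) = ⊤ := by
  have hc' : 0 < ‖c‖ := norm_pos_iff.2 hc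
  obtain ⟨δ, hδ, hnear⟩ : ∃ δ > 0, Ioo 0 δ ⊆ {p | ‖c‖ / 2 < ‖h p‖} :=
    mem_nhdsGT_iff_exists_Ioo_subset.1 (hh.norm.eventually (lt_mem_nhds (half_lt_self hc')))
  refine eq_top_iff.2 (le_of_eq_of_le
    (lintegral_Ioo_ofReal_div_eq_top (k := ‖c‖ ^ 2 / (4 * a)) (by positivity) hδ).symm ?_)
  calc ∫⁻ p in Ioo 0 δ, ENNReal.ofReal (‖c‖ ^ 2 / (4 * a) / p)
      ≤ ∫⁻ p in Ioo 0 δ, ENNReal.ofReal (‖h p‖ ^ 2 / (a * p)) := by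
        refine setLIntegral_mono' measurableSet_Ioo fun p hp => ENNReal.ofReal_le_ofReal ?_
        have hap : 0 < a * p := mul_pos ha hp.1
        have hn : ‖c‖ / 2 < ‖h p‖ := hnear hp
        have hlow : ‖c‖ ^ 2 ≤ 4 * ‖h p‖ ^ 2 := by nlinarith
        rw [div_div, div_le_div_iff₀ (mul_pos (mul_pos four_pos ha) hp.1) hap]
        nlinarith
    _ ≤ _ := lintegral_mono_set Ioo_subset_Ioi_self

lemma lintegral_norm_sq_div_lt_top {C₁ C₂ : ℝ} (ha : 0 < a)
    (hzero : ∀ p ∈ Ioc 0 1, ‖h p‖ ≤ C₁ * p) (hinf : ∀ p, 1 ≤ p → ‖h p‖ ≤ C₂ / p) :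
    ∫⁻ p in Ioi 0, ENNReal.ofReal (‖h p‖ ^ 2 / (a * p)) < ⊤ := by
  rw [← Ioc_union_Ioi_eq_Ioi zero_le_one, lintegral_union measurableSet_Ioi Ioc_disjoint_Ioi_same]
  refine ENNReal.add_lt_top.2 ⟨?_, ?_⟩
  · calc ∫⁻ p in Ioc 0 1, ENNReal.ofReal (‖h p‖ ^ 2 / (a * p))
        ≤ ∫⁻ _ in Ioc (0 : ℝ) 1, ENNReal.ofReal (C₁ ^ 2 / a) := by
          refine setLIntegral_mono' measurableSet_Ioc fun p hp => ENNReal.ofReal_le_ofReal ?_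
          have hsq : ‖h p‖ ^ 2 ≤ C₁ ^ 2 * p :=
            calc ‖h p‖ ^ 2 ≤ (C₁ * p) ^ 2 := pow_le_pow_left₀ (norm_nonneg _) (hzero p hp) 2
              _ = C₁ ^ 2 * p * p := by ring
              _ ≤ C₁ ^ 2 * p := mul_le_of_le_one_right (mul_nonneg (sq_nonneg _) hp.1.le) hp.2
          rw [div_le_div_iff₀ (mul_pos ha hp.1) ha]
          nlinarith
      _ < ⊤ := by simp
  · calc ∫⁻ p in Ioi 1, ENNReal.ofReal (‖h p‖ ^ 2 / (a * p))
        ≤ ∫⁻ p in Ioi (1 : ℝ), ENNReal.ofReal (C₂ ^ 2 / a * p ^ (-2 : ℝ)) := by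
          refine setLIntegral_mono' measurableSet_Ioi fun p hp => ENNReal.ofReal_le_ofReal ?_
          have hp0 : 0 < p := one_pos.trans hp
          have hbound : ‖h p‖ ^ 2 ≤ (C₂ / p) ^ 2 :=
            pow_le_pow_left₀ (norm_nonneg _) (hinf p hp.le) 2
          rw [rpow_neg hp0.le, rpow_two, div_le_iff₀ (mul_pos ha hp0)]
          calc ‖h p‖ ^ 2 ≤ (C₂ / p) ^ 2 := hbound
            _ ≤ C₂ ^ 2 / a * (p ^ 2)⁻¹ * (a * p) := by
              rw [div_pow]
              field_simp
              exact le_mul_of_one_le_right (sq_nonneg _) hp.le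
      _ < ⊤ := IntegrableOn.setLIntegral_lt_top
          ((integrableOn_Ioi_rpow_of_lt (by norm_num) one_pos).const_mul _)

lemma lintegral_norm_sq_div_lt_top_iff {c : E} {C₁ C₂ : ℝ} (ha : 0 < a)
    (hzero : ∀ p ∈ Ioc 0 1, ‖h p - c‖ ≤ C₁ * p) (hinf : ∀ p, 1 ≤ p → ‖h p‖ ≤ C₂ / p) :
    ∫⁻ p in Ioi 0, ENNReal.ofReal (‖h p‖ ^ 2 / (a * p)) < ⊤ ↔ c = 0 := by
  constructor
  · refine fun hfin => by_contra fun hc => (lintegral_norm_sq_div_eq_top hc ?_ ha ▸ hfin).ne rfl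
    rw [tendsto_iff_norm_sub_tendsto_zero]
    have hlin : Tendsto (fun p : ℝ => C₁ * p) (𝓝[>] 0) (𝓝 0) := by
      simpa using ((continuous_const_mul C₁).tendsto 0).mono_left nhdsWithin_le_nhds
    refine squeeze_zero' (Eventually.of_forall fun _ => norm_nonneg _) ?_ hlin
    filter_upwards [Ioc_mem_nhdsGT one_pos] with p hp using hzero p hp
  · rintro rfl
    exact lintegral_norm_sq_div_lt_top ha (by simpa using hzero) hinf

end SquareOverFrequency

section FourierTransform

variable {f : ℝ → ℂ}

lemma norm_sqrt_two_pi_inv : ‖((√(2 * π) : ℝ) : ℂ)⁻¹‖ = (√(2 * π))⁻¹ := by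
  simp [abs_of_nonneg (Real.sqrt_nonneg _)]

lemma norm_exp_neg_I_mul (p y : ℝ) : ‖Complex.exp (-Complex.I * p * y)‖ = 1 := by
  simp [Complex.norm_exp]

lemma ft_eq_fourier (f : ℝ → ℂ) (p : ℝ) :
    ft f p = ((√(2 * π) : ℝ) : ℂ)⁻¹ * 𝓕 f (p / (2 * π)) := by
  rw [ft, Real.fourier_real_eq_integral_exp_smul]
  congr 1
  refine integral_congr_ae (Eventually.of_forall fun y => ?_)
  dsimp only
  rw [smul_eq_mul, mul_comm]
  congr 2
  push_cast
  field_simp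

lemma ft_zero (f : ℝ → ℂ) : ft f 0 = ((√(2 * π) : ℝ) : ℂ)⁻¹ * ∫ y, f y := by
  simp [ft]

lemma norm_ft_le (f : ℝ → ℂ) (p : ℝ) : ‖ft f p‖ ≤ (√(2 * π))⁻¹ * ∫ y, ‖f y‖ := by
  rw [ft, norm_mul, norm_sqrt_two_pi_inv]
  gcongr
  refine (norm_integral_le_integral_norm _).trans_eq ?_
  simp_rw [norm_mul, norm_exp_neg_I_mul, mul_one]

lemma ft_deriv (hf : Integrable f) (hd : Differentiable ℝ f) (hf' : Integrable (deriv f))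
    (p : ℝ) : ft (deriv f) p = Complex.I * p * ft f p := by
  rw [ft_eq_fourier, ft_eq_fourier, Real.fourier_deriv hf hd hf']
  dsimp only
  rw [smul_eq_mul]
  push_cast
  field_simp

lemma abs_mul_norm_ft_le (hf : Integrable f) (hd : Differentiable ℝ f)
    (hf' : Integrable (deriv f)) (p : ℝ) :
    |p| * ‖ft f p‖ ≤ (√(2 * π))⁻¹ * ∫ y, ‖deriv f y‖ := by
  simpa [ft_deriv hf hd hf', mul_assoc] using norm_ft_le (deriv f) p

lemma norm_ft_sub_ft_zero_le (hf : Integrable f) (hf1 : Integrable fun y => |y| * ‖f y‖)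
    (p : ℝ) : ‖ft f p - ft f 0‖ ≤ (√(2 * π))⁻¹ * (∫ y, |y| * ‖f y‖) * |p| := by
  have hint : Integrable fun y => f y * Complex.exp (-Complex.I * p * y) :=
    hf.mul_bdd (by fun_prop) (Eventually.of_forall fun y => (norm_exp_neg_I_mul p y).le)
  have hdiff : ft f p - ft f 0 = ((√(2 * π) : ℝ) : ℂ)⁻¹ *
      ∫ y, f y * (Complex.exp (-Complex.I * p * y) - 1) := by
    rw [ft, ft_zero, ← mul_sub, ← integral_sub hint hf]
    simp_rw [mul_sub, mul_one]
  have hphase (y : ℝ) : ‖Complex.exp (-Complex.I * p * y) - 1‖ ≤ |p| * |y| := by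
    have := Real.norm_exp_I_mul_ofReal_sub_one_le (x := -(p * y))
    rw [show Complex.I * ((-(p * y) : ℝ) : ℂ) = -Complex.I * p * y by push_cast; ring] at this
    simpa [abs_mul] using this
  rw [hdiff, norm_mul, norm_sqrt_two_pi_inv, mul_assoc, ← integral_mul_const]
  gcongr
  refine (norm_integral_le_integral_norm _).trans (integral_mono_of_nonneg
    (Eventually.of_forall fun _ => norm_nonneg _) (hf1.mul_const _)
    (Eventually.of_forall fun y => ?_))
  dsimp only
  rw [norm_mul]
  calc ‖f y‖ * ‖Complex.exp (-Complex.I * p * y) - 1‖ ≤ ‖f y‖ * (|p| * |y|) := by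
        gcongr; exact hphase y
    _ = |y| * ‖f y‖ * |p| := by ring

end FourierTransform

theorem lintegral_norm_ft_sq_div_lt_top_iff {f : ℝ → ℂ} {a : ℝ} (ha : 0 < a)
    (hf : Integrable f) (hf1 : Integrable fun y => |y| * ‖f y‖) (hd : Differentiable ℝ f)
    (hf' : Integrable (deriv f)) :
    ∫⁻ p in Ioi 0, ENNReal.ofReal (‖ft f p‖ ^ 2 / (a * p)) < ⊤ ↔ ∫ y, f y = 0 := by
  have hzero (p : ℝ) (hp : p ∈ Ioc 0 1) :
      ‖ft f p - ft f 0‖ ≤ (√(2 * π))⁻¹ * (∫ y, |y| * ‖f y‖) * p := by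
    simpa [abs_of_pos hp.1] using norm_ft_sub_ft_zero_le hf hf1 p
  have hinf (p : ℝ) (hp : 1 ≤ p) : ‖ft f p‖ ≤ (√(2 * π))⁻¹ * (∫ y, ‖deriv f y‖) / p := by
    rw [le_div_iff₀ (one_pos.trans_le hp), mul_comm]
    simpa [abs_of_pos (one_pos.trans_le hp)] using abs_mul_norm_ft_le hf hd hf' p
  rw [lintegral_norm_sq_div_lt_top_iff ha hzero hinf, ft_zero, mul_eq_zero,
    or_iff_right (by simp [pi_pos.le, pi_ne_zero])]

/-- Since `Real.log t = Real.log |t|`, on `t < 0` this is `|log (-t)| + |t| + 1`. -/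
noncomputable def logWeight (t : ℝ) : ℝ := |log t| + |t| + 1

lemma one_le_logWeight (t : ℝ) : 1 ≤ logWeight t := by
  unfold logWeight
  linarith [abs_nonneg (log t), abs_nonneg t]

lemma abs_log_le_abs {t : ℝ} (ht : 1 ≤ |t|) : |log t| ≤ |t| := by
  rw [← log_abs, abs_of_nonneg (log_nonneg ht)]
  exact log_le_self (abs_nonneg t)

lemma integrable_logWeight_mul_norm (u : 𝓢(ℝ, ℂ)) :
    Integrable fun t => logWeight t * ‖u t‖ := by
  obtain ⟨M, -, hM⟩ := u.decay 0 0
  simp only [pow_zero, one_mul, norm_iteratedFDeriv_zero] at hM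
  have hlog : Integrable ((Ioc (-1) 1).indicator fun t => |log t|) :=
    (integrable_indicator_iff measurableSet_Ioc).2 intervalIntegral.intervalIntegrable_log'.1.norm
  have hmom : Integrable fun t => |t| * ‖u t‖ := by
    simpa using u.integrable_pow_mul volume 1
  refine ((hlog.const_mul M).add ((hmom.const_mul 2).add u.integrable.norm)).mono'
    (by unfold logWeight; fun_prop) (Eventually.of_forall fun t => ?_)
  have hlog_le : |log t| * ‖u t‖ ≤
      M * (Ioc (-1) 1).indicator (fun t => |log t|) t + |t| * ‖u t‖ := by
    by_cases ht : t ∈ Ioc (-1) 1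
    · rw [indicator_of_mem ht]
      nlinarith [hM t, abs_nonneg (log t), abs_nonneg t, norm_nonneg (u t)]
    · have h1 : 1 ≤ |t| := by
        contrapose! ht
        exact ⟨(abs_lt.1 ht).1, (abs_lt.1 ht).2.le⟩
      rw [indicator_of_notMem ht, mul_zero, zero_add]
      exact mul_le_mul_of_nonneg_right (abs_log_le_abs h1) (norm_nonneg _)
  rw [Real.norm_of_nonneg (mul_nonneg ((zero_le_one).trans (one_le_logWeight t)) (norm_nonneg _))]
  have hsplit : logWeight t * ‖u t‖ = |log t| * ‖u t‖ + (|t| * ‖u t‖ + ‖u t‖) := by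
    unfold logWeight; ring
  simp only [hsplit, Pi.add_apply]
  linarith

section ChangeOfVariables

variable {E : Type*} [NormedAddCommGroup E] [NormedSpace ℝ E] {x x' : ℝ → ℝ}

lemma integrable_smul_comp_of_hasDerivAt (hx : ∀ y, HasDerivAt x (x' y) y)
    (hpos : ∀ y, 0 < x' y) {F : ℝ → E} (hF : Integrable F) :
    Integrable fun y => x' y • F (x y) := by
  have := (integrableOn_image_iff_integrableOn_abs_deriv_smul MeasurableSet.univ
    (fun y _ => (hx y).hasDerivWithinAt)
    (strictMono_of_hasDerivAt_pos hx hpos).injective.injOn F).1 hF.integrableOn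
  simpa [abs_of_pos (hpos _)] using this

lemma setIntegral_range_eq_integral_smul_comp (hx : ∀ y, HasDerivAt x (x' y) y)
    (hpos : ∀ y, 0 < x' y) (F : ℝ → E) :
    ∫ t in range x, F t = ∫ y, x' y • F (x y) := by
  rw [← image_univ, integral_image_eq_integral_abs_deriv_smul MeasurableSet.univ
    (fun y _ => (hx y).hasDerivWithinAt)
    (strictMono_of_hasDerivAt_pos hx hpos).injective.injOn, setIntegral_univ]
  simp_rw [abs_of_pos (hpos _)]

end ChangeOfVariables

/-- After the substitution `t = x y`, these bounds give `x' · (g ∘ x)` an integrable first moment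
and an integrable derivative for every Schwartz `g`. -/
structure ModerateCoordinate (x x' x'' : ℝ → ℝ) : Prop where
  hasDerivAt : ∀ y, HasDerivAt x (x' y) y
  hasDerivAt_deriv : ∀ y, HasDerivAt x' (x'' y) y
  deriv_pos : ∀ y, 0 < x' y
  abs_le : ∀ y, |y| ≤ logWeight (x y)
  deriv_le : ∀ y, x' y ≤ logWeight (x y)
  abs_deriv_deriv_le : ∀ y, |x'' y| ≤ x' y * logWeight (x y)

namespace ModerateCoordinate

variable {x x' x'' : ℝ → ℝ} {E : Type*} [NormedAddCommGroup E]

lemma integrable_of_norm_le (hX : ModerateCoordinate x x' x'') (u : 𝓢(ℝ, ℂ)) {f : ℝ → E}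
    (hf : AEStronglyMeasurable f) (hle : ∀ y, ‖f y‖ ≤ x' y * (logWeight (x y) * ‖u (x y)‖)) :
    Integrable f :=
  (integrable_smul_comp_of_hasDerivAt hX.hasDerivAt hX.deriv_pos
    (integrable_logWeight_mul_norm u)).mono' hf (Eventually.of_forall hle)

lemma continuous (hX : ModerateCoordinate x x' x'') : Continuous x :=
  continuous_iff_continuousAt.2 fun y => (hX.hasDerivAt y).continuousAt

lemma continuous_deriv (hX : ModerateCoordinate x x' x'') : Continuous x' :=
  continuous_iff_continuousAt.2 fun y => (hX.hasDerivAt_deriv y).continuousAt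

lemma gout_eq (hX : ModerateCoordinate x x' x'') (g : ℝ → ℂ) :
    gout x g = fun y => (x' y : ℂ) * g (x y) :=
  funext fun y => by rw [gout, (hX.hasDerivAt y).deriv]

lemma norm_gout (hX : ModerateCoordinate x x' x'') (g : ℝ → ℂ) (y : ℝ) :
    ‖gout x g y‖ = x' y * ‖g (x y)‖ := by
  rw [hX.gout_eq, norm_mul, Complex.norm_real, Real.norm_of_nonneg (hX.deriv_pos y).le]

lemma hasDerivAt_gout (hX : ModerateCoordinate x x' x'') {g : ℝ → ℂ} (hg : Differentiable ℝ g)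
    (y : ℝ) : HasDerivAt (gout x g) (x'' y * g (x y) + x' y ^ 2 * deriv g (x y)) y := by
  rw [hX.gout_eq]
  have hcomp : HasDerivAt (fun y => g (x y)) (x' y • deriv g (x y)) y :=
    (hg (x y)).hasDerivAt.scomp y (hX.hasDerivAt y)
  refine ((hX.hasDerivAt_deriv y).ofReal_comp.mul hcomp).congr_deriv ?_
  rw [Complex.real_smul]
  ring

lemma continuous_gout (hX : ModerateCoordinate x x' x'') {g : ℝ → ℂ} (hg : Continuous g) :
    Continuous (gout x g) := by
  have := hX.continuous
  have := hX.continuous_deriv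
  rw [hX.gout_eq]
  fun_prop

lemma integrable_gout (hX : ModerateCoordinate x x' x'') (u : 𝓢(ℝ, ℂ)) :
    Integrable (gout x u) := by
  simpa [hX.gout_eq, Complex.real_smul] using
    integrable_smul_comp_of_hasDerivAt hX.hasDerivAt hX.deriv_pos u.integrable

lemma integrable_abs_mul_norm_gout (hX : ModerateCoordinate x x' x'') (u : 𝓢(ℝ, ℂ)) :
    Integrable fun y => |y| * ‖gout x u y‖ := by
  have hcont := hX.continuous_gout u.continuous
  refine hX.integrable_of_norm_le u (by fun_prop) fun y => ?_
  rw [norm_mul, norm_norm, Real.norm_eq_abs, abs_abs, hX.norm_gout, mul_left_comm]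
  exact mul_le_mul_of_nonneg_left (mul_le_mul_of_nonneg_right (hX.abs_le y) (norm_nonneg _))
    (hX.deriv_pos y).le

lemma integrable_deriv_gout (hX : ModerateCoordinate x x' x'') (u : 𝓢(ℝ, ℂ)) :
    Integrable (deriv (gout x u)) := by
  set u' := SchwartzMap.derivCLM ℝ ℂ u
  have hu' : deriv u = u' := funext fun t => (SchwartzMap.derivCLM_apply ℝ u t).symm
  have hx := hX.continuous
  have hx' := hX.continuous_deriv
  have hx'' : Measurable x'' := by
    rw [show x'' = deriv x' from funext fun y => (hX.hasDerivAt_deriv y).deriv.symm]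
    exact measurable_deriv x'
  rw [funext fun y => (hX.hasDerivAt_gout u.differentiable y).deriv, hu']
  refine Integrable.add (hX.integrable_of_norm_le u (by fun_prop) fun y => ?_)
    (hX.integrable_of_norm_le u' (by fun_prop) fun y => ?_)
  · rw [norm_mul, Complex.norm_real, Real.norm_eq_abs, ← mul_assoc]
    exact mul_le_mul_of_nonneg_right (hX.abs_deriv_deriv_le y) (norm_nonneg _)
  · rw [norm_mul, norm_pow, Complex.norm_real, Real.norm_of_nonneg (hX.deriv_pos y).le, sq,
      mul_assoc]
    exact mul_le_mul_of_nonneg_left (mul_le_mul_of_nonneg_right (hX.deriv_le y) (norm_nonneg _))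
      (hX.deriv_pos y).le

lemma integral_gout (hX : ModerateCoordinate x x' x'') (g : ℝ → ℂ) :
    ∫ y, gout x g y = ∫ t in range x, g t := by
  simp [setIntegral_range_eq_integral_smul_comp hX.hasDerivAt hX.deriv_pos, hX.gout_eq,
    Complex.real_smul]

theorem lintegral_norm_ft_gout_sq_div_lt_top_iff (hX : ModerateCoordinate x x' x'')
    (u : 𝓢(ℝ, ℂ)) {a : ℝ} (ha : 0 < a) :
    ∫⁻ p in Ioi 0, ENNReal.ofReal (‖ft (gout x u) p‖ ^ 2 / (a * p)) < ⊤ ↔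
      ∫ t in range x, u t = 0 := by
  rw [← hX.integral_gout]
  exact lintegral_norm_ft_sq_div_lt_top_iff ha (hX.integrable_gout u)
    (hX.integrable_abs_mul_norm_gout u)
    (fun y => (hX.hasDerivAt_gout u.differentiable y).differentiableAt)
    (hX.integrable_deriv_gout u)

end ModerateCoordinate

lemma hasDerivAt_exp_neg (y : ℝ) : HasDerivAt (fun y => exp (-y)) (-exp (-y)) y := by
  simpa using (hasDerivAt_neg y).exp

lemma logWeight_xR (y : ℝ) : logWeight (xR y) = |y| + exp (-y) + 1 := by
  simp [logWeight, xR]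

lemma moderateCoordinate_xR :
    ModerateCoordinate xR (fun y => exp (-y)) (fun y => -exp (-y)) where
  hasDerivAt y := by
    have h := (hasDerivAt_exp_neg y).fun_neg
    rwa [neg_neg] at h
  hasDerivAt_deriv := hasDerivAt_exp_neg
  deriv_pos _ := exp_pos _
  abs_le y := by rw [logWeight_xR]; linarith [exp_pos (-y)]
  deriv_le y := by rw [logWeight_xR]; linarith [abs_nonneg y]
  abs_deriv_deriv_le y := by
    rw [abs_neg, abs_of_pos (exp_pos _)]
    exact le_mul_of_one_le_right (exp_pos _).le (one_le_logWeight _)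

lemma range_xR : range xR = Iio 0 := by
  refine Subset.antisymm (range_subset_iff.2 fun y => neg_lt_zero.2 (exp_pos _)) fun t ht => ?_
  refine ⟨-log (-t), ?_⟩
  rw [xR, neg_neg, exp_log (neg_pos.2 ht), neg_neg]

lemma hasDerivAt_xC (y : ℝ) : HasDerivAt xC (exp (-y) / (1 + exp (-y))) y := by
  have h := (((hasDerivAt_exp_neg y).const_add 1).log (by positivity)).fun_neg
  rwa [neg_div, neg_neg] at h

lemma hasDerivAt_deriv_xC (y : ℝ) :
    HasDerivAt (fun y => exp (-y) / (1 + exp (-y))) (-(exp (-y) / (1 + exp (-y)) ^ 2)) y := by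
  refine ((hasDerivAt_exp_neg y).div ((hasDerivAt_exp_neg y).const_add 1)
    (by positivity)).congr_deriv ?_
  field_simp
  ring

lemma abs_le_logWeight_xC (y : ℝ) : |y| ≤ logWeight (xC y) := by
  have hL : 0 < log (1 + exp (-y)) := log_pos (by linarith [exp_pos (-y)])
  have hweight : logWeight (xC y) = |log (log (1 + exp (-y)))| + log (1 + exp (-y)) + 1 := by
    simp [logWeight, xC, abs_of_pos hL]
  rw [hweight]
  rcases le_or_gt y 0 with hy | hy
  · have : -y ≤ log (1 + exp (-y)) := by
      simpa using log_le_log (exp_pos (-y)) (le_add_of_nonneg_left zero_le_one)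
    rw [abs_of_nonpos hy]
    linarith [abs_nonneg (log (log (1 + exp (-y))))]
  · have hLe : log (1 + exp (-y)) ≤ exp (-y) := by
      linarith [log_le_sub_one_of_pos (show 0 < 1 + exp (-y) by positivity)]
    have : log (log (1 + exp (-y))) ≤ -y := by simpa using log_le_log hL hLe
    rw [abs_of_pos hy]
    linarith [neg_le_abs (log (log (1 + exp (-y))))]

lemma moderateCoordinate_xC :
    ModerateCoordinate xC (fun y => exp (-y) / (1 + exp (-y)))
      (fun y => -(exp (-y) / (1 + exp (-y)) ^ 2)) where
  hasDerivAt := hasDerivAt_xC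
  hasDerivAt_deriv := hasDerivAt_deriv_xC
  deriv_pos _ := by positivity
  abs_le := abs_le_logWeight_xC
  deriv_le y := (div_le_one_of_le₀ (by linarith) (by positivity)).trans (one_le_logWeight _)
  abs_deriv_deriv_le y := by
    rw [abs_neg, abs_of_pos (by positivity), sq, ← div_div]
    calc exp (-y) / (1 + exp (-y)) / (1 + exp (-y)) ≤ exp (-y) / (1 + exp (-y)) :=
          div_le_self (by positivity) (by linarith [exp_pos (-y)])
      _ ≤ _ := le_mul_of_one_le_right (by positivity) (one_le_logWeight _)

lemma range_xC : range xC = Iio 0 := by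
  refine Subset.antisymm (range_subset_iff.2 fun y => neg_lt_zero.2 (log_pos ?_)) fun t ht => ?_
  · linarith [exp_pos (-y)]
  · have : 1 < exp (-t) := one_lt_exp_iff.2 (neg_pos.2 ht)
    refine ⟨-log (exp (-t) - 1), ?_⟩
    simp [xC, exp_log (sub_pos.2 this)]

theorem stmt_12_general (x : ℝ → ℝ) (hx : x = xR ∨ x = xC) (g : SchwartzMap ℝ ℂ) :
    ((∫⁻ p in Set.Ioi (0:ℝ),
        ENNReal.ofReal (‖ft (gout x (⇑g)) p‖ ^ 2 / (2 * p))) < ⊤ ↔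
      (∫ t in Set.Iio (0:ℝ), g t) = 0) ∧
    ((∫⁻ p in Set.Ioi (0:ℝ),
        ENNReal.ofReal (‖ft (gout x (⇑g)) p‖ ^ 2 / p)) < ⊤ ↔
      (∫ t in Set.Iio (0:ℝ), g t) = 0) := by
  obtain ⟨x', x'', hX, hrange⟩ : ∃ x' x'', ModerateCoordinate x x' x'' ∧ range x = Iio 0 := by
    rcases hx with rfl | rfl
    exacts [⟨_, _, moderateCoordinate_xR, range_xR⟩, ⟨_, _, moderateCoordinate_xC, range_xC⟩]
  have key (a : ℝ) (ha : 0 < a) :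
      ∫⁻ p in Ioi 0, ENNReal.ofReal (‖ft (gout x g) p‖ ^ 2 / (a * p)) < ⊤ ↔
        ∫ t in Iio 0, g t = 0 := by
    rw [hX.lintegral_norm_ft_gout_sq_div_lt_top_iff g ha, hrange]
  exact ⟨key 2 two_pos, by simpa only [one_mul] using key 1 one_pos⟩

/-- For `x = x_R` or `x = x_C` and a Schwartz function `g` of
positive-frequency type, `∫_0^∞ |ǧ̂(p)|²/(2p) dp < ∞` iff `G(0) = ∫_{-∞}^0 g = 0`;
consequently the total mean number of extra created particles `∫_0^∞ |ǧ̂(p)|²/p dp`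
is finite iff `G(0) = 0`. -/
theorem stmt_12 (x : ℝ → ℝ) (hx : x = xR ∨ x = xC) (g : SchwartzMap ℝ ℂ)
    (hgp : ∀ k : ℝ, k ≤ 0 → ft (⇑g) k = 0) :
    ((∫⁻ p in Set.Ioi (0:ℝ),
        ENNReal.ofReal (‖ft (gout x (⇑g)) p‖ ^ 2 / (2 * p))) < ⊤ ↔
      (∫ t in Set.Iio (0:ℝ), g t) = 0) ∧
    ((∫⁻ p in Set.Ioi (0:ℝ),
        ENNReal.ofReal (‖ft (gout x (⇑g)) p‖ ^ 2 / p)) < ⊤ ↔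
      (∫ t in Set.Iio (0:ℝ), g t) = 0) :=
  stmt_12_general x hx g
end

section
/- Let x : ℝ → ℝ be a continuous strictly increasing map, f : ℝ → ℂ integrable, and β > 0. Then the function k ↦ |F̌(k)|²/(2k(e^{βk} − 1)) is nonnegative almost everywhere on ℝ, and as an identity in [0, ∞], N̄^Th_{β,in}[f] = ∫_ℝ |F̌(k)|²/(2k(e^{βk} − 1)) dk = N̄_o[f] + ∫_0^∞ (|F̌(k)|² + |F̌(−k)|²)/(2k(e^{βk} − 1)) dk. In particular N̄_o[f] ≤ N̄^Th_{β,in}[f] for all β > 0. -/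
open MeasureTheory Set Filter
open scoped ENNReal

/-- The mean number of particles emitted when the incoming state is thermal at inverse
temperature `β`: `N̄^Th_{β,in}[f] = ∫_ℝ |F̌(k)|²/(2k(e^{βk}-1)) dk`. -/
noncomputable def NthIn (x : ℝ → ℝ) (β : ℝ) (f : ℝ → ℂ) : ℝ≥0∞ :=
  ∫⁻ k : ℝ, ENNReal.ofReal (‖Fk x f k‖ ^ 2 / (2 * k * (Real.exp (β * k) - 1)))

/-!
Split the frequency line at `0` and reflect the negative half. For `k > 0` the identity
`1 / (1 - e^{-t}) = 1 + 1 / (e^t - 1)` gives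
`1 / (2(-k)(e^{-βk} - 1)) = 1 / (2k) + 1 / (2k(e^{βk} - 1))`, so the negative frequencies
contribute the vacuum number `N̄_o[f]` plus a thermal term. All integrands are nonnegative, so
this is additivity of the lower Lebesgue integral in `[0, ∞]` and no integrability of the weights
is needed; only measurability of `F̌`, which is continuous by dominated convergence.
-/

theorem continuous_Fk {x : ℝ → ℝ} (hx : Measurable x) {f : ℝ → ℂ} (hf : Integrable f) :
    Continuous (Fk x f) := by
  refine continuous_const.mul
    (continuous_of_dominated (bound := fun y => ‖f y‖) ?_ ?_ hf.norm ?_)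
  · exact fun k => hf.1.mul (by fun_prop)
  · refine fun k => ae_of_all _ fun y => ?_
    rw [norm_mul, Complex.norm_exp]
    simp
  · exact ae_of_all _ fun y => by fun_prop

theorem lintegral_eq_lintegral_Ioi_add_lintegral_Ioi_neg (g : ℝ → ℝ≥0∞) :
    ∫⁻ k, g k = (∫⁻ k in Ioi 0, g k) + ∫⁻ k in Ioi 0, g (-k) := by
  rw [← lintegral_add_compl g measurableSet_Ioi, compl_Ioi,
    setLIntegral_congr Iio_ae_eq_Iic.symm,
    ← (Measure.measurePreserving_neg volume).setLIntegral_comp_preimage_emb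
      measurableEmbedding_neg g (Iio 0), neg_preimage, neg_Iio, neg_zero]

noncomputable def planckDenom (β k : ℝ) : ℝ := 2 * k * (Real.exp (β * k) - 1)

theorem planckDenom_nonneg {β : ℝ} (hβ : 0 ≤ β) (k : ℝ) : 0 ≤ planckDenom β k := by
  rcases le_total 0 k with hk | hk
  · exact mul_nonneg (by positivity) (sub_nonneg.2 (Real.one_le_exp (mul_nonneg hβ hk)))
  · exact mul_nonneg_of_nonpos_of_nonpos (by linarith)
      (sub_nonpos.2 (Real.exp_le_one_iff.2 (mul_nonpos_of_nonneg_of_nonpos hβ hk)))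

theorem div_planckDenom_neg (a : ℝ) {β k : ℝ} (hβ : β ≠ 0) (hk : k ≠ 0) :
    a / planckDenom β (-k) = a / (2 * k) + a / planckDenom β k := by
  have he_ne_one : Real.exp (β * k) - 1 ≠ 0 := by
    rw [sub_ne_zero, Ne, Real.exp_eq_one_iff]
    exact mul_ne_zero hβ hk
  have he_ne_zero : Real.exp (β * k) ≠ 0 := (Real.exp_pos _).ne'
  simp only [planckDenom, mul_neg, Real.exp_neg]
  generalize Real.exp (β * k) = e at *
  have one_sub_e_ne : 1 - e ≠ 0 := fun h => he_ne_one (by linarith)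
  field_simp
  ring

theorem lintegral_ofReal_div_planckDenom {β : ℝ} (hβ : 0 < β) {φ : ℝ → ℝ}
    (hφm : Measurable φ) (hφ : 0 ≤ φ) :
    ∫⁻ k, ENNReal.ofReal (φ k / planckDenom β k) =
      (∫⁻ k in Ioi 0, ENNReal.ofReal (φ (-k) / (2 * k))) +
        ∫⁻ k in Ioi 0, ENNReal.ofReal ((φ k + φ (-k)) / planckDenom β k) := by
  have hDm : Measurable (planckDenom β) := by unfold planckDenom; fun_prop
  have hD := planckDenom_nonneg hβ.le
  have hneg : ∀ k ∈ Ioi (0 : ℝ), ENNReal.ofReal (φ (-k) / planckDenom β (-k)) =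
      ENNReal.ofReal (φ (-k) / (2 * k)) + ENNReal.ofReal (φ (-k) / planckDenom β k) := by
    intro k (hk : 0 < k)
    rw [div_planckDenom_neg _ hβ.ne' hk.ne',
      ENNReal.ofReal_add (div_nonneg (hφ _) (by positivity)) (div_nonneg (hφ _) (hD k))]
  have hsum : ∀ k, ENNReal.ofReal ((φ k + φ (-k)) / planckDenom β k) =
      ENNReal.ofReal (φ k / planckDenom β k) + ENNReal.ofReal (φ (-k) / planckDenom β k) :=
    fun k => by
      rw [add_div, ENNReal.ofReal_add (div_nonneg (hφ _) (hD k)) (div_nonneg (hφ _) (hD k))]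
  have hA : Measurable fun k => ENNReal.ofReal (φ (-k) / (2 * k)) := by fun_prop
  have hB : Measurable fun k => ENNReal.ofReal (φ k / planckDenom β k) := by fun_prop
  rw [lintegral_eq_lintegral_Ioi_add_lintegral_Ioi_neg,
    setLIntegral_congr_fun measurableSet_Ioi hneg, lintegral_congr hsum,
    lintegral_add_left hA, lintegral_add_left hB]
  ring

theorem stmt_16_general (x : ℝ → ℝ) (hxc : Continuous x)
    (f : ℝ → ℂ) (hf : MeasureTheory.Integrable f) (β : ℝ) (hβ : 0 < β) :
    (∀ᵐ k : ℝ, 0 ≤ ‖Fk x f k‖ ^ 2 / (2 * k * (Real.exp (β * k) - 1))) ∧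
    NthIn x β f = No x f +
      ∫⁻ k in Set.Ioi (0:ℝ), ENNReal.ofReal
        ((‖Fk x f k‖ ^ 2 + ‖Fk x f (-k)‖ ^ 2) /
          (2 * k * (Real.exp (β * k) - 1))) ∧
    No x f ≤ NthIn x β f := by
  have hφ : Measurable fun k => ‖Fk x f k‖ ^ 2 :=
    ((continuous_Fk hxc.measurable hf).norm.pow 2).measurable
  have hsplit := lintegral_ofReal_div_planckDenom hβ hφ fun k => sq_nonneg _
  exact ⟨ae_of_all _ fun k => div_nonneg (sq_nonneg _) (planckDenom_nonneg hβ.le k), hsplit,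
    le_self_add.trans_eq hsplit.symm⟩

/-- For a continuous strictly increasing `x`, integrable `f` and `β > 0`:
the integrand `k ↦ |F̌(k)|²/(2k(e^{βk}-1))` is a.e. nonnegative, and in `[0,∞]`,
`N̄^Th_{β,in}[f] = N̄_o[f] + ∫_0^∞ (|F̌(k)|² + |F̌(-k)|²)/(2k(e^{βk}-1)) dk`;
in particular `N̄_o[f] ≤ N̄^Th_{β,in}[f]`. -/
theorem stmt_16 (x : ℝ → ℝ) (hxc : Continuous x) (hxm : StrictMono x)
    (f : ℝ → ℂ) (hf : MeasureTheory.Integrable f) (β : ℝ) (hβ : 0 < β) :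
    (∀ᵐ k : ℝ, 0 ≤ ‖Fk x f k‖ ^ 2 / (2 * k * (Real.exp (β * k) - 1))) ∧
    NthIn x β f = No x f +
      ∫⁻ k in Set.Ioi (0:ℝ), ENNReal.ofReal
        ((‖Fk x f k‖ ^ 2 + ‖Fk x f (-k)‖ ^ 2) /
          (2 * k * (Real.exp (β * k) - 1))) ∧
    No x f ≤ NthIn x β f :=
  stmt_16_general x hxc f hf β hβ
end
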